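/- Fix H \in (1/2,1) and a > 0. Then \lim_{t \to +\infty} e^{-2at} \int_0^t\int_0^t e^{a(s_1+s_2)}\,|s_1-s_2|^{2H-2}\,ds_1\,ds_2 = \Gamma(2H-1)\, a^{-2H}, where \Gamma is the Gamma function. -/

import Mathlib

open Filter intervalIntegral

/-! Write `r = 2H - 2 > -1`, `I(t)` for the double integral and `P_c(t) = ∫₀ᵗ e^{cu} u^r du`.
Splitting the inner integral at `s₁` and substituting `u = |s₁ - s₂|` turns it into
`e^{2as₁} (P_{-a}(s₁) + P_a(t - s₁))`; integrating by parts in `s₁` gives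
`e^{-2at} I(t) = (P_{-a}(t) - e^{-2at} P_a(t)) / a`. As `t → ∞`, `P_{-a}(t)` tends to the
Gamma integral `Γ(r+1) a^{-(r+1)}`, while `e^{-2at} P_a(t) ≤ t^{r+1} e^{-at} / (r+1) → 0`. -/

open Real MeasureTheory Set

noncomputable def expMulRpowIntegral (c r t : ℝ) : ℝ :=
  ∫ u in (0 : ℝ)..t, exp (c * u) * u ^ r

lemma intervalIntegrable_abs_rpow {r : ℝ} (hr : -1 < r) (c d : ℝ) :
    IntervalIntegrable (fun u => |u| ^ r) volume c d := by
  have of_nonneg : ∀ c, 0 ≤ c → IntervalIntegrable (fun u => |u| ^ r) volume 0 c := by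
    intro c hc
    have h := intervalIntegrable_rpow' (a := 0) (b := c) hr
    rw [intervalIntegrable_iff, uIoc_of_le hc] at h ⊢
    exact h.congr_fun (fun x hx => by rw [abs_of_pos hx.1]) measurableSet_Ioc
  have from_zero : ∀ c, IntervalIntegrable (fun u => |u| ^ r) volume 0 c := by
    intro c
    rcases le_total 0 c with hc | hc
    · exact of_nonneg c hc
    · simpa using (IntervalIntegrable.iff_comp_neg (by simp)).mp (of_nonneg (-c) (by linarith))
  exact (from_zero c).symm.trans (from_zero d)

lemma intervalIntegrable_exp_mul_rpow {r : ℝ} (hr : -1 < r) (c x y : ℝ) :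
    IntervalIntegrable (fun u => exp (c * u) * u ^ r) volume x y :=
  (intervalIntegrable_rpow' hr).continuousOn_mul (by fun_prop)

lemma continuous_expMulRpowIntegral {r : ℝ} (hr : -1 < r) (c : ℝ) :
    Continuous (expMulRpowIntegral c r) :=
  continuous_primitive (intervalIntegrable_exp_mul_rpow hr c) 0

lemma hasDerivAt_expMulRpowIntegral {r : ℝ} (hr : -1 < r) (c : ℝ) {x : ℝ} (hx : 0 < x) :
    HasDerivAt (expMulRpowIntegral c r) (exp (c * x) * x ^ r) x :=
  integral_hasDerivAt_right (intervalIntegrable_exp_mul_rpow hr c 0 x)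
    ((by fun_prop : Measurable fun u => exp (c * u) * u ^ r)
      |>.stronglyMeasurable.stronglyMeasurableAtFilter)
    ((continuous_exp.comp (continuous_const_mul c)).continuousAt.mul
      (continuousAt_rpow_const x r (Or.inl hx.ne')))

lemma integral_exp_mul_expMulRpowIntegral {r b : ℝ} (hr : -1 < r) (hb : b ≠ 0) (c : ℝ)
    {t : ℝ} (ht : 0 ≤ t) :
    ∫ s in (0 : ℝ)..t, exp (b * s) * expMulRpowIntegral c r s
      = (exp (b * t) * expMulRpowIntegral c r t - expMulRpowIntegral (b + c) r t) / b := by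
  have hP := continuous_expMulRpowIntegral hr c
  have hQ := continuous_expMulRpowIntegral hr (b + c)
  rw [integral_eq_sub_of_hasDeriv_right_of_le
    (f := fun s => (exp (b * s) * expMulRpowIntegral c r s - expMulRpowIntegral (b + c) r s) / b)
    ht (by fun_prop) (fun x hx => ?_)
    ((by fun_prop : Continuous fun s => exp (b * s) * expMulRpowIntegral c r s).intervalIntegrable
      0 t)]
  · simp [expMulRpowIntegral]
  · have hexp : HasDerivAt (fun s => exp (b * s)) (exp (b * x) * b) x := by
      simpa using ((hasDerivAt_id x).const_mul b).exp
    refine (((hexp.mul (hasDerivAt_expMulRpowIntegral hr c hx.1)).sub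
      (hasDerivAt_expMulRpowIntegral hr (b + c) hx.1)).div_const b).hasDerivWithinAt.congr_deriv ?_
    rw [add_mul, exp_add]
    field_simp
    ring

lemma integral_exp_mul_abs_sub_rpow {r : ℝ} (hr : -1 < r) (a : ℝ) {s t : ℝ} (hs : s ∈ Icc 0 t) :
    ∫ s₂ in (0 : ℝ)..t, exp (a * (s + s₂)) * |s - s₂| ^ r
      = exp (2 * a * s) * (expMulRpowIntegral (-a) r s + expMulRpowIntegral a r (t - s)) := by
  have hint : ∀ x y,
      IntervalIntegrable (fun s₂ => exp (a * (s + s₂)) * |s - s₂| ^ r) volume x y := fun x y => by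
    have habs := (intervalIntegrable_abs_rpow hr (s - x) (s - y)).comp_sub_left s
    simpa using habs.continuousOn_mul (by fun_prop : ContinuousOn (fun s₂ => exp (a * (s + s₂))) _)
  have left : ∫ s₂ in (0 : ℝ)..s, exp (a * (s + s₂)) * |s - s₂| ^ r
      = exp (2 * a * s) * expMulRpowIntegral (-a) r s := by
    calc ∫ s₂ in (0 : ℝ)..s, exp (a * (s + s₂)) * |s - s₂| ^ r
        = ∫ s₂ in (0 : ℝ)..s, exp (2 * a * s) * (exp (-a * (s - s₂)) * (s - s₂) ^ r) := by
          refine integral_congr fun x hx => ?_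
          rw [uIcc_of_le hs.1] at hx
          simp only [abs_of_nonneg (sub_nonneg.2 hx.2), ← mul_assoc, ← exp_add]
          ring_nf
      _ = exp (2 * a * s) * expMulRpowIntegral (-a) r s := by
          rw [intervalIntegral.integral_const_mul,
            intervalIntegral.integral_comp_sub_left (fun u => exp (-a * u) * u ^ r)]
          simp [expMulRpowIntegral]
  have right : ∫ s₂ in s..t, exp (a * (s + s₂)) * |s - s₂| ^ r
      = exp (2 * a * s) * expMulRpowIntegral a r (t - s) := by
    calc ∫ s₂ in s..t, exp (a * (s + s₂)) * |s - s₂| ^ r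
        = ∫ s₂ in s..t, exp (2 * a * s) * (exp (a * (s₂ - s)) * (s₂ - s) ^ r) := by
          refine integral_congr fun x hx => ?_
          rw [uIcc_of_le hs.2] at hx
          simp only [abs_sub_comm s, abs_of_nonneg (sub_nonneg.2 hx.1), ← mul_assoc, ← exp_add]
          ring_nf
      _ = exp (2 * a * s) * expMulRpowIntegral a r (t - s) := by
          rw [intervalIntegral.integral_const_mul,
            intervalIntegral.integral_comp_sub_right (fun u => exp (a * u) * u ^ r)]
          simp [expMulRpowIntegral]
  rw [← integral_add_adjacent_intervals (hint 0 s) (hint s t), left, right, mul_add]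

lemma exp_mul_integral_integral_exp_abs_sub_rpow {r a : ℝ} (hr : -1 < r) (ha : a ≠ 0) {t : ℝ}
    (ht : 0 ≤ t) :
    exp (-2 * a * t) * ∫ s₁ in (0 : ℝ)..t, ∫ s₂ in (0 : ℝ)..t,
        exp (a * (s₁ + s₂)) * |s₁ - s₂| ^ r
      = (expMulRpowIntegral (-a) r t - exp (-2 * a * t) * expMulRpowIntegral a r t) / a := by
  have hK := continuous_expMulRpowIntegral hr (-a)
  have hJ := continuous_expMulRpowIntegral hr a
  have reflect : ∫ s in (0 : ℝ)..t, exp (2 * a * s) * expMulRpowIntegral a r (t - s)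
      = exp (2 * a * t) * ∫ u in (0 : ℝ)..t, exp (-(2 * a) * u) * expMulRpowIntegral a r u := by
    have h := intervalIntegral.integral_comp_sub_left (a := 0) (b := t)
      (fun u => exp (2 * a * t) * (exp (-(2 * a) * u) * expMulRpowIntegral a r u)) t
    rw [sub_self, sub_zero] at h
    rw [← intervalIntegral.integral_const_mul, ← h]
    refine integral_congr fun s _ => ?_
    simp only [← mul_assoc, ← exp_add]
    ring_nf
  calc exp (-2 * a * t) * ∫ s₁ in (0 : ℝ)..t, ∫ s₂ in (0 : ℝ)..t,
        exp (a * (s₁ + s₂)) * |s₁ - s₂| ^ r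
      = exp (-2 * a * t) * ((∫ s in (0 : ℝ)..t, exp (2 * a * s) * expMulRpowIntegral (-a) r s)
          + ∫ s in (0 : ℝ)..t, exp (2 * a * s) * expMulRpowIntegral a r (t - s)) := by
        rw [← intervalIntegral.integral_add
          ((by fun_prop : Continuous fun s => exp (2 * a * s) * expMulRpowIntegral (-a) r s)
            |>.intervalIntegrable _ _)
          ((by fun_prop : Continuous fun s => exp (2 * a * s) * expMulRpowIntegral a r (t - s))
            |>.intervalIntegrable _ _)]
        congr 1
        refine integral_congr fun s hs => ?_
        rw [integral_exp_mul_abs_sub_rpow hr a (uIcc_of_le ht ▸ hs), mul_add]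
    _ = (expMulRpowIntegral (-a) r t - exp (-2 * a * t) * expMulRpowIntegral a r t) / a := by
        rw [reflect, integral_exp_mul_expMulRpowIntegral hr (by simpa using ha) _ ht,
          integral_exp_mul_expMulRpowIntegral hr (by simpa using ha) _ ht,
          show 2 * a + -a = a by ring, show -(2 * a) + a = -a by ring]
        simp only [neg_mul, exp_neg]
        field_simp
        ring

lemma tendsto_expMulRpowIntegral_neg {r a : ℝ} (hr : -1 < r) (ha : 0 < a) :
    Tendsto (expMulRpowIntegral (-a) r) atTop (nhds (Gamma (r + 1) * a ^ (-(r + 1)))) := by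
  have hint : IntegrableOn (fun u => exp (-a * u) * u ^ r) (Ioi 0) := by
    simpa only [rpow_one, mul_comm] using integrableOn_rpow_mul_exp_neg_mul_rpow hr one_pos ha
  have hval : ∫ u in Ioi (0 : ℝ), exp (-a * u) * u ^ r = Gamma (r + 1) * a ^ (-(r + 1)) := by
    have h := integral_rpow_mul_exp_neg_mul_Ioi (by linarith : 0 < r + 1) ha
    rw [add_sub_cancel_right, one_div, inv_rpow ha.le, ← rpow_neg ha.le, mul_comm] at h
    simpa only [neg_mul, mul_comm (exp _)] using h
  exact hval ▸ intervalIntegral_tendsto_integral_Ioi 0 hint tendsto_id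

lemma tendsto_exp_mul_expMulRpowIntegral {r a : ℝ} (hr : -1 < r) (ha : 0 < a) :
    Tendsto (fun t => exp (-2 * a * t) * expMulRpowIntegral a r t) atTop (nhds 0) := by
  have hr1 : 0 < r + 1 := by linarith
  have bound : Tendsto (fun t : ℝ => t ^ (r + 1) * exp (-a * t) / (r + 1)) atTop (nhds 0) := by
    simpa using (tendsto_rpow_mul_exp_neg_mul_atTop_nhds_zero (r + 1) a ha).div_const (r + 1)
  refine tendsto_of_tendsto_of_tendsto_of_le_of_le' tendsto_const_nhds bound ?_ ?_
  all_goals filter_upwards [eventually_ge_atTop 0] with t ht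
  · exact mul_nonneg (exp_pos _).le
      (integral_nonneg ht fun u hu => mul_nonneg (exp_pos _).le (rpow_nonneg hu.1 r))
  · have hle : expMulRpowIntegral a r t ≤ ∫ u in (0 : ℝ)..t, exp (a * t) * u ^ r :=
      integral_mono_on ht (intervalIntegrable_exp_mul_rpow hr a 0 t)
        ((intervalIntegrable_rpow' hr).const_mul _) fun u hu =>
          mul_le_mul_of_nonneg_right (exp_le_exp.2 (by nlinarith [hu.2]))
            (rpow_nonneg hu.1 r)
    rw [intervalIntegral.integral_const_mul, integral_rpow (Or.inl hr),
      zero_rpow hr1.ne', sub_zero] at hle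
    calc exp (-2 * a * t) * expMulRpowIntegral a r t
        ≤ exp (-2 * a * t) * (exp (a * t) * (t ^ (r + 1) / (r + 1))) := by gcongr
      _ = t ^ (r + 1) * exp (-a * t) / (r + 1) := by
        rw [← mul_assoc, ← exp_add]
        ring_nf

theorem tendsto_exp_mul_integral_integral_exp_abs_sub_rpow {r a : ℝ} (hr : -1 < r) (ha : 0 < a) :
    Tendsto (fun t => exp (-2 * a * t) * ∫ s₁ in (0 : ℝ)..t, ∫ s₂ in (0 : ℝ)..t,
        exp (a * (s₁ + s₂)) * |s₁ - s₂| ^ r)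
      atTop (nhds (Gamma (r + 1) * a ^ (-(r + 2)))) := by
  have hlim := ((tendsto_expMulRpowIntegral_neg hr ha).sub
    (tendsto_exp_mul_expMulRpowIntegral hr ha)).div_const a
  rw [sub_zero, mul_div_assoc, ← rpow_sub_one ha.ne', show -(r + 1) - 1 = -(r + 2) by ring]
    at hlim
  refine hlim.congr' ?_
  filter_upwards [eventually_ge_atTop 0] with t ht
  exact (exp_mul_integral_integral_exp_abs_sub_rpow hr ha.ne' ht).symm

theorem fOU_invariant_variance_general (H a : ℝ) (hH1 : 1 / 2 < H) (ha : 0 < a) :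
    Tendsto
      (fun t : ℝ => Real.exp (-2 * a * t) *
        ∫ s₁ in (0 : ℝ)..t, ∫ s₂ in (0 : ℝ)..t,
          Real.exp (a * (s₁ + s₂)) * |s₁ - s₂| ^ (2 * H - 2))
      atTop (nhds (Real.Gamma (2 * H - 1) * a ^ (-(2 * H)))) := by
  have h := tendsto_exp_mul_integral_integral_exp_abs_sub_rpow (r := 2 * H - 2) (by linarith) ha
  rwa [show 2 * H - 2 + 1 = 2 * H - 1 by ring, show 2 * H - 2 + 2 = 2 * H by ring] at h

/-- For `H ∈ (1/2,1)` and `a > 0`,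
`e^{-2at} ∫_0^t ∫_0^t e^{a(s₁+s₂)} |s₁-s₂|^{2H-2} ds₁ ds₂ → Γ(2H-1) a^{-2H}` as `t → +∞`. -/
theorem fOU_invariant_variance (H a : ℝ) (hH1 : 1 / 2 < H) (hH2 : H < 1) (ha : 0 < a) :
    Tendsto
      (fun t : ℝ => Real.exp (-2 * a * t) *
        ∫ s₁ in (0 : ℝ)..t, ∫ s₂ in (0 : ℝ)..t,
          Real.exp (a * (s₁ + s₂)) * |s₁ - s₂| ^ (2 * H - 2))
      atTop (nhds (Real.Gamma (2 * H - 1) * a ^ (-(2 * H)))) :=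
  fOU_invariant_variance_general H a hH1 ha
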